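/- Closed form of the optimal state trajectory (Lemma 6.1): Assume SOSC, and let (p*, q*) be the unique global minimizer of the QDP with direction l. For i ∈ {0,…,N−1} and k ∈ {0,…,N}, define O_k = B_kW_k⁻¹B_kᵀ, U_i^k = Σ_{s=0}^{min(i,k)−1} (E_{k−1}E_{k−2}⋯E_{s+1}) O_s (M_i^{s+1})ᵀ − [i+1 ≤ k]·(E_{k−1}⋯E_{i+1}) B_i W_i⁻¹ D_{i2}ᵀ and F_i^k = Σ_{s=0}^{min(i,k)−1} (E_{k−1}⋯E_{s+1}) O_s (V_i^{s+1})ᵀ + [i+1 ≤ k]·(E_{k−1}⋯E_{i+1}) (I − O_iK_{i+1}), where [·] denotes the indicator (1 if the condition holds, 0 otherwise) and empty products of the E's are the identity. Then for every k ∈ {0,…,N}: p*_k = (E_{k−1}E_{k−2}⋯E_0) l_{−1} + Σ_{i=0}^{N−1} U_i^k l_i + Σ_{i=0}^{N−1} F_i^k C_i l_i. -/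

import Mathlib

open Matrix BigOperators Finset

/-- Ordered product of matrices: `prodE E i len = E (i+len-1) * ⋯ * E (i+1) * E i`. -/
def prodE {n : ℕ} (E : ℕ → Matrix (Fin n) (Fin n) ℝ) : ℕ → ℕ → Matrix (Fin n) (Fin n) ℝ
  | _, 0 => 1
  | i, (len + 1) => E (i + len) * prodE E i len

/-- `V_i^k = -K_{i+1} (E_i E_{i-1} ⋯ E_k)`. -/
noncomputable def Vmat {nx : ℕ} (K E : ℕ → Matrix (Fin nx) (Fin nx) ℝ) (i k : ℕ) :
    Matrix (Fin nx) (Fin nx) ℝ :=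
  -(K (i + 1) * prodE E k (i + 1 - k))

/-- `M_i^k = -(D_{i1} + D_{i2} P_i) (E_{i-1} E_{i-2} ⋯ E_k)`. -/
noncomputable def Mmat {nx nu nd : ℕ} (D1 : ℕ → Matrix (Fin nd) (Fin nx) ℝ)
    (D2 : ℕ → Matrix (Fin nd) (Fin nu) ℝ) (P : ℕ → Matrix (Fin nu) (Fin nx) ℝ)
    (E : ℕ → Matrix (Fin nx) (Fin nx) ℝ) (i k : ℕ) : Matrix (Fin nd) (Fin nx) ℝ :=
  -((D1 i + D2 i * P i) * prodE E k (i - k))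

/-- `O_k = B_k W_k⁻¹ B_kᵀ`. -/
noncomputable def Okm {nx nu : ℕ} (B : ℕ → Matrix (Fin nx) (Fin nu) ℝ)
    (W : ℕ → Matrix (Fin nu) (Fin nu) ℝ) (k : ℕ) : Matrix (Fin nx) (Fin nx) ℝ :=
  B k * (W k)⁻¹ * (B k)ᵀ

/-- The sensitivity kernel `U_i^k`. -/
noncomputable def Umat {nx nu nd : ℕ} (B : ℕ → Matrix (Fin nx) (Fin nu) ℝ)
    (W : ℕ → Matrix (Fin nu) (Fin nu) ℝ) (P : ℕ → Matrix (Fin nu) (Fin nx) ℝ)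
    (E : ℕ → Matrix (Fin nx) (Fin nx) ℝ)
    (D1 : ℕ → Matrix (Fin nd) (Fin nx) ℝ) (D2 : ℕ → Matrix (Fin nd) (Fin nu) ℝ)
    (i k : ℕ) : Matrix (Fin nx) (Fin nd) ℝ :=
  (∑ s ∈ range (min i k),
      prodE E (s + 1) (k - 1 - s) * Okm B W s * (Mmat D1 D2 P E i (s + 1))ᵀ)
    - (if i + 1 ≤ k then prodE E (i + 1) (k - 1 - i) * B i * (W i)⁻¹ * (D2 i)ᵀ else 0)

/-- The sensitivity kernel `F_i^k`. -/
noncomputable def Fmat {nx nu : ℕ} (B : ℕ → Matrix (Fin nx) (Fin nu) ℝ)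
    (W : ℕ → Matrix (Fin nu) (Fin nu) ℝ)
    (K E : ℕ → Matrix (Fin nx) (Fin nx) ℝ) (i k : ℕ) : Matrix (Fin nx) (Fin nx) ℝ :=
  (∑ s ∈ range (min i k),
      prodE E (s + 1) (k - 1 - s) * Okm B W s * (Vmat K E i (s + 1))ᵀ)
    + (if i + 1 ≤ k then prodE E (i + 1) (k - 1 - i) * (1 - Okm B W i * K (i + 1)) else 0)

/-- Feasibility for the QDP constraints. -/
def Feas {nx nu nd : ℕ} (N : ℕ)
    (A : ℕ → Matrix (Fin nx) (Fin nx) ℝ) (B : ℕ → Matrix (Fin nx) (Fin nu) ℝ)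
    (C : ℕ → Matrix (Fin nx) (Fin nd) ℝ) (lm1 : Fin nx → ℝ) (l : ℕ → Fin nd → ℝ)
    (p : ℕ → Fin nx → ℝ) (q : ℕ → Fin nu → ℝ) : Prop :=
  p 0 = lm1 ∧ ∀ k < N, p (k + 1) = A k *ᵥ p k + B k *ᵥ q k + C k *ᵥ l k

/-- The QDP objective `J(p,q)`. -/
noncomputable def qdpObj {nx nu nd : ℕ} (N : ℕ)
    (Q : ℕ → Matrix (Fin nx) (Fin nx) ℝ) (R : ℕ → Matrix (Fin nu) (Fin nu) ℝ)
    (S : ℕ → Matrix (Fin nu) (Fin nx) ℝ) (D1 : ℕ → Matrix (Fin nd) (Fin nx) ℝ)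
    (D2 : ℕ → Matrix (Fin nd) (Fin nu) ℝ) (l : ℕ → Fin nd → ℝ)
    (p : ℕ → Fin nx → ℝ) (q : ℕ → Fin nu → ℝ) : ℝ :=
  (∑ k ∈ range N,
      (p k ⬝ᵥ Q k *ᵥ p k + 2 * (q k ⬝ᵥ S k *ᵥ p k) + q k ⬝ᵥ R k *ᵥ q k
        + 2 * (l k ⬝ᵥ D1 k *ᵥ p k) + 2 * (l k ⬝ᵥ D2 k *ᵥ q k)))
    + p N ⬝ᵥ Q N *ᵥ p N

/-- SOSC. -/
def SOSC {nx nu : ℕ} (N : ℕ)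
    (A : ℕ → Matrix (Fin nx) (Fin nx) ℝ) (B : ℕ → Matrix (Fin nx) (Fin nu) ℝ)
    (Q : ℕ → Matrix (Fin nx) (Fin nx) ℝ) (R : ℕ → Matrix (Fin nu) (Fin nu) ℝ)
    (S : ℕ → Matrix (Fin nu) (Fin nx) ℝ) : Prop :=
  ∀ (p : ℕ → Fin nx → ℝ) (q : ℕ → Fin nu → ℝ),
    p 0 = 0 → (∀ k < N, p (k + 1) = A k *ᵥ p k + B k *ᵥ q k) →
    ¬ ((∀ k ≤ N, p k = 0) ∧ (∀ k < N, q k = 0)) →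
    0 < (∑ k ∈ range N,
        (p k ⬝ᵥ Q k *ᵥ p k + 2 * (q k ⬝ᵥ S k *ᵥ p k) + q k ⬝ᵥ R k *ᵥ q k))
      + p N ⬝ᵥ Q N *ᵥ p N

/-!
Completing the square stage by stage along the Riccati recursion writes the objective, on the
feasible set, as a constant plus `∑ k, δ_kᵀ W_k δ_k`, where `δ_k = q_k - P_k p_k - v_k` is the
deviation of the control from the affine feedback law with feedforward term `v_k`. SOSC, tested on
trajectories that vanish up to time `k` and follow the feedback afterwards, makes every `W_k`
positive definite (by downward induction, since the identity at the later stages needs the later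
`W_j` invertible). Hence a minimizer has `δ = 0`, i.e. `p_{k+1} = E_k p_k + B_k v_k + C_k l_k`;
unrolling this recursion, with the linear coefficients `r_k` of the cost-to-go written out through
`M` and `V`, produces the kernels `U` and `F`.
-/

section StageAlgebra

variable {n m d : Type*} [Fintype n] [Fintype m] [Fintype d]

theorem dotProduct_transpose_mulVec_eq_mulVec_dotProduct (M : Matrix n m ℝ) (x : m → ℝ)
    (y : n → ℝ) :
    x ⬝ᵥ Mᵀ *ᵥ y = (M *ᵥ x) ⬝ᵥ y := by
  rw [dotProduct_transpose_mulVec, dotProduct_comm]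

theorem transpose_mulVec_dotProduct (M : Matrix n m ℝ) (x : m → ℝ) (y : n → ℝ) :
    (Mᵀ *ᵥ y) ⬝ᵥ x = y ⬝ᵥ M *ᵥ x := by
  rw [dotProduct_comm, dotProduct_transpose_mulVec]

theorem Matrix.IsSymm.dotProduct_mulVec_comm {M : Matrix n n ℝ} (hM : M.IsSymm) (x y : n → ℝ) :
    x ⬝ᵥ M *ᵥ y = y ⬝ᵥ M *ᵥ x := by
  rw [← hM.eq, dotProduct_transpose_mulVec, hM.eq]

def stageCost (Q : Matrix n n ℝ) (S : Matrix m n ℝ) (R : Matrix m m ℝ) (D1 : Matrix d n ℝ)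
    (D2 : Matrix d m ℝ) (l : d → ℝ) (x : n → ℝ) (u : m → ℝ) : ℝ :=
  x ⬝ᵥ Q *ᵥ x + 2 * (u ⬝ᵥ S *ᵥ x) + u ⬝ᵥ R *ᵥ u + 2 * (l ⬝ᵥ D1 *ᵥ x) + 2 * (l ⬝ᵥ D2 *ᵥ u)

def costToGo (K : Matrix n n ℝ) (r x : n → ℝ) : ℝ :=
  x ⬝ᵥ K *ᵥ x + 2 * (r ⬝ᵥ x)

/-- Completing the square in one stage of the Riccati recursion. -/
theorem stageCost_add_costToGo {A K' Q K : Matrix n n ℝ} {B : Matrix n m ℝ}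
    {S P : Matrix m n ℝ} {R W : Matrix m m ℝ} {D1 : Matrix d n ℝ} {D2 : Matrix d m ℝ}
    {l : d → ℝ} {c r r' : n → ℝ} {v : m → ℝ}
    (hK' : K'.IsSymm) (hWsymm : W.IsSymm) (hW : W = R + Bᵀ * K' * B)
    (hWP : W * P = -(Bᵀ * K' * A + S)) (hK : K = Q + Aᵀ * K' * A + (Bᵀ * K' * A + S)ᵀ * P)
    (hr : r = (D1 + D2 * P)ᵀ *ᵥ l + (A + B * P)ᵀ *ᵥ (K' *ᵥ c + r'))
    (hv : W *ᵥ v = -(D2ᵀ *ᵥ l + Bᵀ *ᵥ (K' *ᵥ c + r'))) (x : n → ℝ) (u : m → ℝ) :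
    stageCost Q S R D1 D2 l x u + costToGo K' r' (A *ᵥ x + B *ᵥ u + c)
      = costToGo K r x + (u - P *ᵥ x - v) ⬝ᵥ W *ᵥ (u - P *ᵥ x - v)
        + (c ⬝ᵥ K' *ᵥ c + 2 * (r' ⬝ᵥ c) - v ⬝ᵥ W *ᵥ v) := by
  have hR : R = W - Bᵀ * K' * B := by rw [hW]; abel
  have hS : S = -(W * P) - Bᵀ * K' * A := by rw [hWP]; abel
  have hK2 : K = Q + Aᵀ * K' * A - Pᵀ * W * P := by
    rw [hK, ← neg_neg (Bᵀ * K' * A + S), ← hWP, transpose_neg, transpose_mul, hWsymm.eq]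
    simp only [Matrix.neg_mul, Matrix.mul_assoc]
    abel
  have hWv : ∀ z, z ⬝ᵥ W *ᵥ v = -(l ⬝ᵥ D2 *ᵥ z) - (K' *ᵥ c + r') ⬝ᵥ B *ᵥ z := fun z => by
    rw [hv]
    simp only [dotProduct_neg, dotProduct_add, dotProduct_transpose_mulVec]
    ring
  have hK'c : ∀ z, (K' *ᵥ c) ⬝ᵥ z = c ⬝ᵥ K' *ᵥ z := fun z => by
    rw [dotProduct_comm, hK'.dotProduct_mulVec_comm]
  subst hR hS hK2 hr
  simp only [stageCost, costToGo, Matrix.add_mulVec, Matrix.sub_mulVec, Matrix.neg_mulVec,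
    Matrix.mulVec_add, Matrix.mulVec_sub, ← Matrix.mulVec_mulVec,
    dotProduct_add, dotProduct_sub, dotProduct_neg, add_dotProduct, sub_dotProduct,
    Matrix.transpose_add, Matrix.transpose_mul, hWv, hWsymm.dotProduct_mulVec_comm v]
  simp only [dotProduct_transpose_mulVec_eq_mulVec_dotProduct, transpose_mulVec_dotProduct, hK'c]
  rw [hWsymm.dotProduct_mulVec_comm (P *ᵥ x) u, hK'.dotProduct_mulVec_comm (A *ᵥ x) (B *ᵥ u),
    hK'.dotProduct_mulVec_comm (A *ᵥ x) c, hK'.dotProduct_mulVec_comm (B *ᵥ u) c]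
  ring

end StageAlgebra

theorem sum_Ico_add_eq_of_step {f g V : ℕ → ℝ} {a b : ℕ} (hab : a ≤ b)
    (h : ∀ k, a ≤ k → k < b → f k + V (k + 1) = V k + g k) :
    ∑ k ∈ Ico a b, f k + V b = V a + ∑ k ∈ Ico a b, g k := by
  induction b, hab using Nat.le_induction with
  | base => simp
  | succ b hab ih =>
    rw [sum_Ico_succ_top hab, sum_Ico_succ_top hab]
    linarith [ih fun k hak hkb => h k hak (by omega), h b hab (by omega)]

theorem sum_range_ite_lt {M : Type*} [AddCommMonoid M] (f : ℕ → M) (k N : ℕ) :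
    ∑ i ∈ range N, (if k < i then f i else 0) = ∑ i ∈ Ico (k + 1) N, f i := by
  rw [← sum_filter]
  congr 1
  ext i
  simp only [mem_filter, mem_range, mem_Ico]
  omega

structure IsRiccatiSolution {nx nu : ℕ} (N : ℕ)
    (A : ℕ → Matrix (Fin nx) (Fin nx) ℝ) (B : ℕ → Matrix (Fin nx) (Fin nu) ℝ)
    (Q : ℕ → Matrix (Fin nx) (Fin nx) ℝ) (R : ℕ → Matrix (Fin nu) (Fin nu) ℝ)
    (S : ℕ → Matrix (Fin nu) (Fin nx) ℝ)
    (K : ℕ → Matrix (Fin nx) (Fin nx) ℝ) (W : ℕ → Matrix (Fin nu) (Fin nu) ℝ)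
    (P : ℕ → Matrix (Fin nu) (Fin nx) ℝ) (E : ℕ → Matrix (Fin nx) (Fin nx) ℝ) : Prop where
  K_terminal : K N = Q N
  W_eq : ∀ k < N, W k = R k + (B k)ᵀ * K (k + 1) * B k
  P_eq : ∀ k < N, P k = -((W k)⁻¹ * ((B k)ᵀ * K (k + 1) * A k + S k))
  K_eq : ∀ k < N, K k =
    Q k + (A k)ᵀ * K (k + 1) * A k
      - ((B k)ᵀ * K (k + 1) * A k + S k)ᵀ * (W k)⁻¹ * ((B k)ᵀ * K (k + 1) * A k + S k)
  E_eq : ∀ k < N, E k = A k + B k * P k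

namespace IsRiccatiSolution

variable {nx nu N : ℕ} {A : ℕ → Matrix (Fin nx) (Fin nx) ℝ} {B : ℕ → Matrix (Fin nx) (Fin nu) ℝ}
  {Q : ℕ → Matrix (Fin nx) (Fin nx) ℝ} {R : ℕ → Matrix (Fin nu) (Fin nu) ℝ}
  {S : ℕ → Matrix (Fin nu) (Fin nx) ℝ}
  {K : ℕ → Matrix (Fin nx) (Fin nx) ℝ} {W : ℕ → Matrix (Fin nu) (Fin nu) ℝ}
  {P : ℕ → Matrix (Fin nu) (Fin nx) ℝ} {E : ℕ → Matrix (Fin nx) (Fin nx) ℝ}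

theorem W_isSymm (h : IsRiccatiSolution N A B Q R S K W P E) {k : ℕ} (hk : k < N)
    (hR : (R k).IsSymm) (hK : (K (k + 1)).IsSymm) : (W k).IsSymm := by
  rw [IsSymm, h.W_eq k hk, transpose_add, transpose_mul, transpose_mul, transpose_transpose,
    hR.eq, hK.eq, Matrix.mul_assoc]

theorem K_isSymm (h : IsRiccatiSolution N A B Q R S K W P E) (hQ : ∀ k ≤ N, (Q k).IsSymm)
    (hR : ∀ k < N, (R k).IsSymm) {k : ℕ} (hk : k ≤ N) : (K k).IsSymm := by
  induction hk using Nat.decreasingInduction with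
  | self => rw [IsSymm, h.K_terminal]; exact (hQ N le_rfl).eq
  | of_succ k hk ih =>
    have hWinv : ((W k)⁻¹).IsSymm := by
      rw [IsSymm, transpose_nonsing_inv, (h.W_isSymm hk (hR k hk) ih).eq]
    rw [IsSymm, h.K_eq k hk]
    simp only [transpose_sub, transpose_add, transpose_mul, transpose_transpose, ih.eq,
      hWinv.eq, (hQ k hk.le).eq, Matrix.mul_assoc]

theorem W_mul_P (h : IsRiccatiSolution N A B Q R S K W P E) {k : ℕ} (hk : k < N)
    (hW : IsUnit (W k)) : W k * P k = -((B k)ᵀ * K (k + 1) * A k + S k) := by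
  rw [h.P_eq k hk, Matrix.mul_neg, ← Matrix.mul_assoc,
    mul_nonsing_inv _ ((isUnit_iff_isUnit_det _).mp hW), Matrix.one_mul]

theorem K_eq_add_mul_P (h : IsRiccatiSolution N A B Q R S K W P E) {k : ℕ} (hk : k < N) :
    K k = Q k + (A k)ᵀ * K (k + 1) * A k
      + ((B k)ᵀ * K (k + 1) * A k + S k)ᵀ * P k := by
  rw [h.K_eq k hk, h.P_eq k hk]
  simp only [Matrix.mul_neg, Matrix.mul_assoc, sub_eq_add_neg]

theorem quadCost_feedback (h : IsRiccatiSolution N A B Q R S K W P E) {k : ℕ} (hk : k < N)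
    (hK : (K (k + 1)).IsSymm) (hW : (W k).PosDef) (x : Fin nx → ℝ) :
    x ⬝ᵥ Q k *ᵥ x + 2 * (P k *ᵥ x ⬝ᵥ S k *ᵥ x) + P k *ᵥ x ⬝ᵥ R k *ᵥ (P k *ᵥ x)
      + E k *ᵥ x ⬝ᵥ K (k + 1) *ᵥ (E k *ᵥ x) = x ⬝ᵥ K k *ᵥ x := by
  have key := stageCost_add_costToGo (D1 := 0) (D2 := 0) (l := (0 : Fin 0 → ℝ))
    (c := 0) (r := 0) (r' := 0) (v := 0) hK (isHermitian_iff_isSymm.mp hW.isHermitian)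
    (h.W_eq k hk) (h.W_mul_P hk hW.isUnit) (h.K_eq_add_mul_P hk) (by simp) (by simp) x (P k *ᵥ x)
  simpa [stageCost, costToGo, h.E_eq k hk, Matrix.add_mulVec, Matrix.mulVec_mulVec] using key

theorem sum_quadCost_feedback (h : IsRiccatiSolution N A B Q R S K W P E)
    (hK : ∀ k ≤ N, (K k).IsSymm) {a : ℕ} (ha : a ≤ N) (hW : ∀ j, a ≤ j → j < N → (W j).PosDef)
    {p : ℕ → Fin nx → ℝ} {q : ℕ → Fin nu → ℝ}
    (hp : ∀ j, a ≤ j → j < N → p (j + 1) = E j *ᵥ p j)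
    (hq : ∀ j, a ≤ j → j < N → q j = P j *ᵥ p j) :
    ∑ j ∈ Ico a N, (p j ⬝ᵥ Q j *ᵥ p j + 2 * (q j ⬝ᵥ S j *ᵥ p j) + q j ⬝ᵥ R j *ᵥ q j)
      + p N ⬝ᵥ Q N *ᵥ p N = p a ⬝ᵥ K a *ᵥ p a := by
  have hsum := sum_Ico_add_eq_of_step (g := 0) (V := fun j => p j ⬝ᵥ K j *ᵥ p j)
    (f := fun j => p j ⬝ᵥ Q j *ᵥ p j + 2 * (q j ⬝ᵥ S j *ᵥ p j) + q j ⬝ᵥ R j *ᵥ q j) ha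
    fun j haj hjN => by
      simp only [hq j haj hjN, hp j haj hjN, Pi.zero_apply, add_zero]
      exact h.quadCost_feedback hjN (hK (j + 1) hjN) (hW j haj hjN) (p j)
  simpa [h.K_terminal] using hsum

/-- SOSC tested on the trajectory that vanishes up to time `k`, applies `u` at time `k` and then
follows the feedback `P`, whose cost is `uᵀ W_k u`. -/
theorem W_posDef_of_forall_gt (h : IsRiccatiSolution N A B Q R S K W P E)
    (hK : ∀ k ≤ N, (K k).IsSymm) (hR : ∀ k < N, (R k).IsSymm) (hsosc : SOSC N A B Q R S)
    {k : ℕ} (hk : k < N) (hlater : ∀ j, k < j → j < N → (W j).PosDef) : (W k).PosDef := by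
  refine .of_dotProduct_mulVec_pos
    (isHermitian_iff_isSymm.mpr (h.W_isSymm hk (hR k hk) (hK (k + 1) hk))) fun u hu => ?_
  rw [star_trivial]
  set p : ℕ → Fin nx → ℝ := fun j => if j ≤ k then 0 else prodE E (k + 1) (j - k - 1) *ᵥ (B k *ᵥ u)
    with hp
  set q : ℕ → Fin nu → ℝ := fun j => if j = k then u else P j *ᵥ p j with hq
  have hp_le : ∀ j ≤ k, p j = 0 := fun j hj => if_pos hj
  have hp_succ_k : p (k + 1) = B k *ᵥ u := by simp [hp, prodE]
  have hp_succ : ∀ j, k < j → p (j + 1) = E j *ᵥ p j := by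
    intro j hj
    simp only [hp, if_neg (show ¬ j + 1 ≤ k by omega), if_neg (show ¬ j ≤ k by omega)]
    rw [show j + 1 - k - 1 = j - k - 1 + 1 by omega, prodE, show k + 1 + (j - k - 1) = j by omega,
      ← Matrix.mulVec_mulVec]
  have hq_ne : ∀ j, j ≠ k → q j = P j *ᵥ p j := fun j hj => if_neg hj
  have hdyn : ∀ j < N, p (j + 1) = A j *ᵥ p j + B j *ᵥ q j := by
    intro j hj
    rcases lt_trichotomy j k with hjk | rfl | hjk
    · simp [hp_le j hjk.le, hp_le (j + 1) hjk, hq_ne j hjk.ne]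
    · simp [hp_succ_k, hp_le j le_rfl, hq]
    · rw [hp_succ j hjk, hq_ne j hjk.ne', h.E_eq j hj, Matrix.add_mulVec, Matrix.mulVec_mulVec]
  have hcost := hsosc p q (hp_le 0 k.zero_le) hdyn fun h0 => hu (by simpa [hq] using h0.2 k hk)
  have hhead : ∑ j ∈ range (k + 1),
      (p j ⬝ᵥ Q j *ᵥ p j + 2 * (q j ⬝ᵥ S j *ᵥ p j) + q j ⬝ᵥ R j *ᵥ q j) = u ⬝ᵥ R k *ᵥ u := by
    rw [sum_range_succ, sum_eq_zero fun j hj => ?_]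
    · simp [hp_le k le_rfl, hq]
    · have hjk := mem_range.mp hj
      simp [hp_le j hjk.le, hq_ne j hjk.ne]
  have htail := h.sum_quadCost_feedback hK hk hlater
    (fun j hkj _ => hp_succ j hkj) (fun j hkj _ => hq_ne j (by omega))
  have hWk : u ⬝ᵥ W k *ᵥ u = u ⬝ᵥ R k *ᵥ u + B k *ᵥ u ⬝ᵥ K (k + 1) *ᵥ (B k *ᵥ u) := by
    rw [h.W_eq k hk, Matrix.add_mulVec, dotProduct_add, ← Matrix.mulVec_mulVec,
      ← Matrix.mulVec_mulVec, dotProduct_transpose_mulVec_eq_mulVec_dotProduct]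
  rw [← sum_range_add_sum_Ico _ hk, hhead] at hcost
  rw [hp_succ_k] at htail
  linarith

theorem W_posDef (h : IsRiccatiSolution N A B Q R S K W P E)
    (hK : ∀ k ≤ N, (K k).IsSymm) (hR : ∀ k < N, (R k).IsSymm) (hsosc : SOSC N A B Q R S)
    {k : ℕ} (hk : k < N) : (W k).PosDef := by
  induction hNk : N - k using Nat.strong_induction_on generalizing k with
  | _ m ih =>
    exact h.W_posDef_of_forall_gt hK hR hsosc hk fun j hkj hjN => ih (N - j) (by omega) hjN rfl

end IsRiccatiSolution

theorem prodE_succ_eq_prodE_mul_E {n : ℕ} (E : ℕ → Matrix (Fin n) (Fin n) ℝ) (len i : ℕ) :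
    prodE E i (len + 1) = prodE E (i + 1) len * E i := by
  induction len generalizing i with
  | zero => simp [prodE]
  | succ len ih =>
    rw [prodE, ih, prodE, show i + (len + 1) = i + 1 + len by omega, Matrix.mul_assoc]

section Kernels

variable {nx nu nd : ℕ} {K E : ℕ → Matrix (Fin nx) (Fin nx) ℝ}
  {D1 : ℕ → Matrix (Fin nd) (Fin nx) ℝ} {D2 : ℕ → Matrix (Fin nd) (Fin nu) ℝ}
  {P : ℕ → Matrix (Fin nu) (Fin nx) ℝ}

theorem Mmat_self (k : ℕ) : Mmat D1 D2 P E k k = -(D1 k + D2 k * P k) := by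
  simp [Mmat, prodE]

theorem Mmat_eq_mul_of_lt {i k : ℕ} (h : k < i) :
    Mmat D1 D2 P E i k = Mmat D1 D2 P E i (k + 1) * E k := by
  rw [Mmat, Mmat, show i - k = i - (k + 1) + 1 by omega, prodE_succ_eq_prodE_mul_E,
    Matrix.neg_mul, Matrix.mul_assoc]

theorem Vmat_self (k : ℕ) : Vmat K E k k = -(K (k + 1) * E k) := by
  simp [Vmat, show k + 1 - k = 1 by omega, prodE]

theorem Vmat_eq_mul_of_lt {i k : ℕ} (h : k < i) :
    Vmat K E i k = Vmat K E i (k + 1) * E k := by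
  rw [Vmat, Vmat, show i + 1 - k = i + 1 - (k + 1) + 1 by omega, prodE_succ_eq_prodE_mul_E,
    Matrix.neg_mul, Matrix.mul_assoc]

end Kernels

/-- The linear coefficient `r_k` of the cost-to-go `x ↦ xᵀ K_k x + 2 r_kᵀ x + const`. -/
noncomputable def costToGoOffset {nx nu nd : ℕ} (N : ℕ) (K E : ℕ → Matrix (Fin nx) (Fin nx) ℝ)
    (C : ℕ → Matrix (Fin nx) (Fin nd) ℝ) (D1 : ℕ → Matrix (Fin nd) (Fin nx) ℝ)
    (D2 : ℕ → Matrix (Fin nd) (Fin nu) ℝ) (P : ℕ → Matrix (Fin nu) (Fin nx) ℝ)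
    (l : ℕ → Fin nd → ℝ) (k : ℕ) : Fin nx → ℝ :=
  -∑ i ∈ Ico k N, ((Mmat D1 D2 P E i k)ᵀ *ᵥ l i + (Vmat K E i k)ᵀ *ᵥ (C i *ᵥ l i))

noncomputable def feedforward {nx nu nd : ℕ} (N : ℕ) (K E : ℕ → Matrix (Fin nx) (Fin nx) ℝ)
    (B : ℕ → Matrix (Fin nx) (Fin nu) ℝ) (W : ℕ → Matrix (Fin nu) (Fin nu) ℝ)
    (C : ℕ → Matrix (Fin nx) (Fin nd) ℝ) (D1 : ℕ → Matrix (Fin nd) (Fin nx) ℝ)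
    (D2 : ℕ → Matrix (Fin nd) (Fin nu) ℝ) (P : ℕ → Matrix (Fin nu) (Fin nx) ℝ)
    (l : ℕ → Fin nd → ℝ) (k : ℕ) : Fin nu → ℝ :=
  -((W k)⁻¹ *ᵥ ((D2 k)ᵀ *ᵥ l k
      + (B k)ᵀ *ᵥ (K (k + 1) *ᵥ (C k *ᵥ l k) + costToGoOffset N K E C D1 D2 P l (k + 1))))

noncomputable def closedLoopState {nx nu nd : ℕ} (N : ℕ) (K E : ℕ → Matrix (Fin nx) (Fin nx) ℝ)
    (B : ℕ → Matrix (Fin nx) (Fin nu) ℝ) (W : ℕ → Matrix (Fin nu) (Fin nu) ℝ)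
    (C : ℕ → Matrix (Fin nx) (Fin nd) ℝ) (D1 : ℕ → Matrix (Fin nd) (Fin nx) ℝ)
    (D2 : ℕ → Matrix (Fin nd) (Fin nu) ℝ) (P : ℕ → Matrix (Fin nu) (Fin nx) ℝ)
    (l : ℕ → Fin nd → ℝ) (lm1 : Fin nx → ℝ) : ℕ → Fin nx → ℝ
  | 0 => lm1
  | k + 1 => E k *ᵥ closedLoopState N K E B W C D1 D2 P l lm1 k
      + B k *ᵥ feedforward N K E B W C D1 D2 P l k + C k *ᵥ l k

section Offset

variable {nx nu nd N : ℕ} {K E : ℕ → Matrix (Fin nx) (Fin nx) ℝ}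
  {B : ℕ → Matrix (Fin nx) (Fin nu) ℝ} {W : ℕ → Matrix (Fin nu) (Fin nu) ℝ}
  {C : ℕ → Matrix (Fin nx) (Fin nd) ℝ} {D1 : ℕ → Matrix (Fin nd) (Fin nx) ℝ}
  {D2 : ℕ → Matrix (Fin nd) (Fin nu) ℝ} {P : ℕ → Matrix (Fin nu) (Fin nx) ℝ}
  {l : ℕ → Fin nd → ℝ}

@[simp]
theorem costToGoOffset_self : costToGoOffset N K E C D1 D2 P l N = 0 := by
  simp [costToGoOffset]

theorem costToGoOffset_eq_succ {k : ℕ} (hk : k < N) (hK : (K (k + 1)).IsSymm) :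
    costToGoOffset N K E C D1 D2 P l k = (D1 k + D2 k * P k)ᵀ *ᵥ l k
      + (E k)ᵀ *ᵥ (K (k + 1) *ᵥ (C k *ᵥ l k) + costToGoOffset N K E C D1 D2 P l (k + 1)) := by
  have htail : ∀ i ∈ Ico (k + 1) N,
      (Mmat D1 D2 P E i k)ᵀ *ᵥ l i + (Vmat K E i k)ᵀ *ᵥ (C i *ᵥ l i)
        = (E k)ᵀ *ᵥ ((Mmat D1 D2 P E i (k + 1))ᵀ *ᵥ l i
          + (Vmat K E i (k + 1))ᵀ *ᵥ (C i *ᵥ l i)) := fun i hi => by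
    have hki : k < i := (mem_Ico.mp hi).1
    rw [Mmat_eq_mul_of_lt hki, Vmat_eq_mul_of_lt hki, transpose_mul, transpose_mul,
      Matrix.mulVec_add, ← Matrix.mulVec_mulVec, ← Matrix.mulVec_mulVec]
  rw [costToGoOffset, costToGoOffset, sum_eq_sum_Ico_succ_bot hk, sum_congr rfl htail,
    ← Matrix.mulVec_sum, Mmat_self, Vmat_self, transpose_neg, transpose_neg, transpose_mul, hK.eq]
  simp only [Matrix.neg_mulVec, Matrix.mulVec_neg, Matrix.mulVec_add, ← Matrix.mulVec_mulVec]
  abel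

theorem W_mulVec_feedforward {k : ℕ} (hW : IsUnit (W k)) :
    W k *ᵥ feedforward N K E B W C D1 D2 P l k = -((D2 k)ᵀ *ᵥ l k
      + (B k)ᵀ *ᵥ (K (k + 1) *ᵥ (C k *ᵥ l k) + costToGoOffset N K E C D1 D2 P l (k + 1))) := by
  rw [feedforward, Matrix.mulVec_neg, Matrix.mulVec_mulVec,
    mul_nonsing_inv _ ((isUnit_iff_isUnit_det _).mp hW), Matrix.one_mulVec]

end Offset

namespace IsRiccatiSolution

variable {nx nu nd N : ℕ} {A : ℕ → Matrix (Fin nx) (Fin nx) ℝ} {B : ℕ → Matrix (Fin nx) (Fin nu) ℝ}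
  {C : ℕ → Matrix (Fin nx) (Fin nd) ℝ}
  {Q : ℕ → Matrix (Fin nx) (Fin nx) ℝ} {R : ℕ → Matrix (Fin nu) (Fin nu) ℝ}
  {S : ℕ → Matrix (Fin nu) (Fin nx) ℝ}
  {D1 : ℕ → Matrix (Fin nd) (Fin nx) ℝ} {D2 : ℕ → Matrix (Fin nd) (Fin nu) ℝ}
  {K : ℕ → Matrix (Fin nx) (Fin nx) ℝ} {W : ℕ → Matrix (Fin nu) (Fin nu) ℝ}
  {P : ℕ → Matrix (Fin nu) (Fin nx) ℝ} {E : ℕ → Matrix (Fin nx) (Fin nx) ℝ}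
  {lm1 : Fin nx → ℝ} {l : ℕ → Fin nd → ℝ}

theorem qdpObj_eq_add_sum (h : IsRiccatiSolution N A B Q R S K W P E)
    (hK : ∀ k ≤ N, (K k).IsSymm) (hW : ∀ k < N, (W k).PosDef) :
    ∃ c₀ : ℝ, ∀ p q, Feas N A B C lm1 l p q → qdpObj N Q R S D1 D2 l p q = c₀ +
      ∑ k ∈ range N, (q k - P k *ᵥ p k - feedforward N K E B W C D1 D2 P l k)
        ⬝ᵥ W k *ᵥ (q k - P k *ᵥ p k - feedforward N K E B W C D1 D2 P l k) := by
  set r := costToGoOffset N K E C D1 D2 P l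
  set v := feedforward N K E B W C D1 D2 P l
  refine ⟨costToGo (K 0) (r 0) lm1 + ∑ k ∈ range N, (C k *ᵥ l k ⬝ᵥ K (k + 1) *ᵥ (C k *ᵥ l k)
    + 2 * (r (k + 1) ⬝ᵥ C k *ᵥ l k) - v k ⬝ᵥ W k *ᵥ v k), fun p q hpq => ?_⟩
  have hsum := sum_Ico_add_eq_of_step N.zero_le
    (f := fun k => stageCost (Q k) (S k) (R k) (D1 k) (D2 k) (l k) (p k) (q k))
    (V := fun k => costToGo (K k) (r k) (p k))
    (g := fun k => (q k - P k *ᵥ p k - v k) ⬝ᵥ W k *ᵥ (q k - P k *ᵥ p k - v k)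
      + (C k *ᵥ l k ⬝ᵥ K (k + 1) *ᵥ (C k *ᵥ l k) + 2 * (r (k + 1) ⬝ᵥ C k *ᵥ l k)
        - v k ⬝ᵥ W k *ᵥ v k)) fun k _ hk => by
      have hr := costToGoOffset_eq_succ (E := E) (C := C) (D1 := D1) (D2 := D2) (P := P) (l := l)
        hk (hK (k + 1) hk)
      rw [h.E_eq k hk] at hr
      rw [hpq.2 k hk]
      refine (stageCost_add_costToGo (hK (k + 1) hk)
        (isHermitian_iff_isSymm.mp (hW k hk).isHermitian) (h.W_eq k hk)
        (h.W_mul_P hk (hW k hk).isUnit) (h.K_eq_add_mul_P hk) hr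
        (W_mulVec_feedforward (hW k hk).isUnit) (p k) (q k)).trans (add_assoc _ _ _)
  rw [← range_eq_Ico, sum_add_distrib] at hsum
  simp only [stageCost, costToGo, r, costToGoOffset_self, h.K_terminal, zero_dotProduct,
    mul_zero, add_zero, hpq.1] at hsum ⊢
  rw [qdpObj]
  linarith

theorem eq_feedback_of_isMinimizer (h : IsRiccatiSolution N A B Q R S K W P E)
    (hK : ∀ k ≤ N, (K k).IsSymm) (hW : ∀ k < N, (W k).PosDef)
    {p : ℕ → Fin nx → ℝ} {q : ℕ → Fin nu → ℝ} (hfeas : Feas N A B C lm1 l p q)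
    (hmin : ∀ p' q', Feas N A B C lm1 l p' q' →
      qdpObj N Q R S D1 D2 l p q ≤ qdpObj N Q R S D1 D2 l p' q')
    {k : ℕ} (hk : k < N) : q k = P k *ᵥ p k + feedforward N K E B W C D1 D2 P l k := by
  obtain ⟨c₀, hc₀⟩ := h.qdpObj_eq_add_sum hK hW (C := C) (D1 := D1) (D2 := D2) (lm1 := lm1)
    (l := l)
  set v := feedforward N K E B W C D1 D2 P l
  set x := closedLoopState N K E B W C D1 D2 P l lm1
  have hx : Feas N A B C lm1 l x fun k => P k *ᵥ x k + v k := ⟨rfl, fun k hk => by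
    simp only [x, closedLoopState, h.E_eq k hk, Matrix.add_mulVec, Matrix.mulVec_add,
      Matrix.mulVec_mulVec]
    abel⟩
  have hle := hmin _ _ hx
  rw [hc₀ p q hfeas, hc₀ _ _ hx] at hle
  simp only [add_sub_cancel_left, sub_self, Matrix.mulVec_zero, dotProduct_zero, sum_const_zero,
    add_zero] at hle
  set δ := fun j => q j - P j *ᵥ p j - v j
  have hnonneg : ∀ j ∈ range N, 0 ≤ δ j ⬝ᵥ W j *ᵥ δ j := fun j hj => by
    simpa using (hW j (mem_range.mp hj)).posSemidef.dotProduct_mulVec_nonneg (δ j)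
  have hδ := (sum_eq_zero_iff_of_nonneg hnonneg).mp (by linarith [sum_nonneg hnonneg]) k
    (mem_range.mpr hk)
  by_contra hne
  have hpos := (hW k hk).dotProduct_mulVec_pos (x := δ k) (by simpa only [δ, sub_sub, sub_ne_zero])
  rw [star_trivial] at hpos
  linarith

end IsRiccatiSolution

section ClosedForm

variable {n : ℕ} {α : Type*} (E : ℕ → Matrix (Fin n) (Fin n) ℝ)

theorem prodE_eq_E_mul_prodE {s k : ℕ} (h : s < k) :
    prodE E (s + 1) (k + 1 - 1 - s) = E k * prodE E (s + 1) (k - 1 - s) := by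
  rw [show k + 1 - 1 - s = k - 1 - s + 1 by omega, prodE, show s + 1 + (k - 1 - s) = k by omega]

theorem sum_range_min_succ_prodE_mul (X : ℕ → Matrix (Fin n) α ℝ) (i k : ℕ) :
    ∑ s ∈ range (min i (k + 1)), prodE E (s + 1) (k + 1 - 1 - s) * X s
      = E k * ∑ s ∈ range (min i k), prodE E (s + 1) (k - 1 - s) * X s
        + if k < i then X k else 0 := by
  have hstep : ∀ s ∈ range (min i k),
      prodE E (s + 1) (k + 1 - 1 - s) * X s = E k * (prodE E (s + 1) (k - 1 - s) * X s) :=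
    fun s hs => by rw [prodE_eq_E_mul_prodE E (lt_min_iff.mp (mem_range.mp hs)).2, Matrix.mul_assoc]
  by_cases hki : k < i
  · rw [min_eq_right hki, min_eq_right hki.le, sum_range_succ, if_pos hki, Matrix.mul_sum,
      sum_congr rfl (by rwa [min_eq_right hki.le] at hstep), Nat.add_sub_cancel, Nat.sub_self,
      prodE, Matrix.one_mul]
  · rw [if_neg hki, add_zero, Matrix.mul_sum, ← sum_congr rfl hstep, min_eq_left (by omega),
      min_eq_left (by omega)]

theorem ite_prodE_succ_mul (Y : Matrix (Fin n) α ℝ) (i k : ℕ) :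
    (if i + 1 ≤ k + 1 then prodE E (i + 1) (k + 1 - 1 - i) * Y else 0)
      = E k * (if i + 1 ≤ k then prodE E (i + 1) (k - 1 - i) * Y else 0)
        + if i = k then Y else 0 := by
  rcases lt_trichotomy i k with hik | rfl | hik
  · rw [if_pos (by omega), if_pos (by omega), if_neg hik.ne, prodE_eq_E_mul_prodE E hik, add_zero,
      Matrix.mul_assoc]
  · simp [prodE]
  · simp [show ¬ i ≤ k by omega, show ¬ i + 1 ≤ k by omega, hik.ne']

end ClosedForm

section KernelRecursions

variable {nx nu nd : ℕ} {B : ℕ → Matrix (Fin nx) (Fin nu) ℝ} {W : ℕ → Matrix (Fin nu) (Fin nu) ℝ}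
  {P : ℕ → Matrix (Fin nu) (Fin nx) ℝ} {K E : ℕ → Matrix (Fin nx) (Fin nx) ℝ}
  {D1 : ℕ → Matrix (Fin nd) (Fin nx) ℝ} {D2 : ℕ → Matrix (Fin nd) (Fin nu) ℝ}

theorem Umat_succ (i k : ℕ) :
    Umat B W P E D1 D2 i (k + 1) = E k * Umat B W P E D1 D2 i k
      - (if i = k then B i * (W i)⁻¹ * (D2 i)ᵀ else 0)
      + (if k < i then Okm B W k * (Mmat D1 D2 P E i (k + 1))ᵀ else 0) := by
  simp only [Umat, Matrix.mul_assoc]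
  rw [sum_range_min_succ_prodE_mul, ite_prodE_succ_mul, Matrix.mul_sub]
  abel

theorem Fmat_succ (i k : ℕ) :
    Fmat B W K E i (k + 1) = E k * Fmat B W K E i k
      + (if i = k then 1 - Okm B W i * K (i + 1) else 0)
      + (if k < i then Okm B W k * (Vmat K E i (k + 1))ᵀ else 0) := by
  simp only [Fmat, Matrix.mul_assoc]
  rw [sum_range_min_succ_prodE_mul, ite_prodE_succ_mul, Matrix.mul_add]
  abel

end KernelRecursions

noncomputable def stateClosedForm {nx nu nd : ℕ} (N : ℕ) (B : ℕ → Matrix (Fin nx) (Fin nu) ℝ)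
    (W : ℕ → Matrix (Fin nu) (Fin nu) ℝ) (P : ℕ → Matrix (Fin nu) (Fin nx) ℝ)
    (K E : ℕ → Matrix (Fin nx) (Fin nx) ℝ) (C : ℕ → Matrix (Fin nx) (Fin nd) ℝ)
    (D1 : ℕ → Matrix (Fin nd) (Fin nx) ℝ) (D2 : ℕ → Matrix (Fin nd) (Fin nu) ℝ)
    (lm1 : Fin nx → ℝ) (l : ℕ → Fin nd → ℝ) (k : ℕ) : Fin nx → ℝ :=
  prodE E 0 k *ᵥ lm1
    + (∑ i ∈ range N, Umat B W P E D1 D2 i k *ᵥ l i)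
    + (∑ i ∈ range N, (Fmat B W K E i k * C i) *ᵥ l i)

section StateClosedForm

variable {nx nu nd N : ℕ} {B : ℕ → Matrix (Fin nx) (Fin nu) ℝ}
  {W : ℕ → Matrix (Fin nu) (Fin nu) ℝ} {P : ℕ → Matrix (Fin nu) (Fin nx) ℝ}
  {K E : ℕ → Matrix (Fin nx) (Fin nx) ℝ} {C : ℕ → Matrix (Fin nx) (Fin nd) ℝ}
  {D1 : ℕ → Matrix (Fin nd) (Fin nx) ℝ} {D2 : ℕ → Matrix (Fin nd) (Fin nu) ℝ}
  {lm1 : Fin nx → ℝ} {l : ℕ → Fin nd → ℝ}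

theorem stateClosedForm_zero : stateClosedForm N B W P K E C D1 D2 lm1 l 0 = lm1 := by
  simp [stateClosedForm, prodE, Umat, Fmat]

theorem stateClosedForm_succ {k : ℕ} (hk : k < N) :
    stateClosedForm N B W P K E C D1 D2 lm1 l (k + 1)
      = E k *ᵥ stateClosedForm N B W P K E C D1 D2 lm1 l k
        + B k *ᵥ feedforward N K E B W C D1 D2 P l k + C k *ᵥ l k := by
  have hterm : ∀ i, Umat B W P E D1 D2 i (k + 1) *ᵥ l i + (Fmat B W K E i (k + 1) * C i) *ᵥ l i
      = E k *ᵥ (Umat B W P E D1 D2 i k *ᵥ l i + (Fmat B W K E i k * C i) *ᵥ l i)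
        + (if i = k then (B k * (W k)⁻¹ * (D2 k)ᵀ) *ᵥ -l k
            + ((1 - Okm B W k * K (k + 1)) * C k) *ᵥ l k else 0)
        + (if k < i then Okm B W k *ᵥ ((Mmat D1 D2 P E i (k + 1))ᵀ *ᵥ l i
            + (Vmat K E i (k + 1))ᵀ *ᵥ (C i *ᵥ l i)) else 0) := by
    intro i
    rw [Umat_succ, Fmat_succ]
    split_ifs with hik hki
    · omega
    · subst hik
      simp only [Matrix.sub_mul, Matrix.add_mulVec, Matrix.sub_mulVec, Matrix.mulVec_add,
        Matrix.mulVec_neg, ← Matrix.mulVec_mulVec, add_zero]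
      abel
    · simp only [Matrix.add_mulVec, Matrix.mulVec_add, ← Matrix.mulVec_mulVec,
        Matrix.zero_mulVec, sub_zero]
      abel
    · simp only [Matrix.mulVec_add, ← Matrix.mulVec_mulVec, sub_zero, add_zero]
  -- `B_k v_k + C_k l_k` is the `i = k` increment plus `-O_k r_{k+1}`, the `k < i` increments.
  rw [stateClosedForm, stateClosedForm, add_assoc, ← sum_add_distrib,
    sum_congr rfl fun i _ => hterm i, sum_add_distrib, sum_add_distrib, ← Matrix.mulVec_sum,
    sum_ite_eq', if_pos (mem_range.mpr hk), sum_range_ite_lt, ← Matrix.mulVec_sum, feedforward,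
    costToGoOffset, prodE]
  simp only [Okm, Matrix.mulVec_add, Matrix.mulVec_neg, Matrix.sub_mulVec, ← Matrix.mulVec_mulVec,
    Matrix.sub_mul, Matrix.one_mul, sum_add_distrib, zero_add]
  abel

end StateClosedForm

theorem qdp_optimal_state_closed_form_general
    (N nx nu nd : ℕ)
    (A : ℕ → Matrix (Fin nx) (Fin nx) ℝ) (B : ℕ → Matrix (Fin nx) (Fin nu) ℝ)
    (C : ℕ → Matrix (Fin nx) (Fin nd) ℝ)
    (Q : ℕ → Matrix (Fin nx) (Fin nx) ℝ) (R : ℕ → Matrix (Fin nu) (Fin nu) ℝ)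
    (S : ℕ → Matrix (Fin nu) (Fin nx) ℝ)
    (D1 : ℕ → Matrix (Fin nd) (Fin nx) ℝ) (D2 : ℕ → Matrix (Fin nd) (Fin nu) ℝ)
    (hQsymm : ∀ k ≤ N, (Q k).IsSymm) (hRsymm : ∀ k < N, (R k).IsSymm)
    (lm1 : Fin nx → ℝ) (l : ℕ → Fin nd → ℝ)
    (hsosc : SOSC N A B Q R S)
    (K : ℕ → Matrix (Fin nx) (Fin nx) ℝ) (W : ℕ → Matrix (Fin nu) (Fin nu) ℝ)
    (P : ℕ → Matrix (Fin nu) (Fin nx) ℝ) (E : ℕ → Matrix (Fin nx) (Fin nx) ℝ)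
    (hKN : K N = Q N)
    (hW : ∀ k < N, W k = R k + (B k)ᵀ * K (k + 1) * B k)
    (hP : ∀ k < N, P k = -((W k)⁻¹ * ((B k)ᵀ * K (k + 1) * A k + S k)))
    (hK : ∀ k < N, K k =
      Q k + (A k)ᵀ * K (k + 1) * A k
        - ((B k)ᵀ * K (k + 1) * A k + S k)ᵀ * (W k)⁻¹ * ((B k)ᵀ * K (k + 1) * A k + S k))
    (hE : ∀ k < N, E k = A k + B k * P k)
    (p : ℕ → Fin nx → ℝ) (q : ℕ → Fin nu → ℝ)
    (hfeas : Feas N A B C lm1 l p q)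
    (hmin : ∀ p' q', Feas N A B C lm1 l p' q' →
      qdpObj N Q R S D1 D2 l p q ≤ qdpObj N Q R S D1 D2 l p' q') :
    ∀ k ≤ N, p k =
      prodE E 0 k *ᵥ lm1
        + (∑ i ∈ range N, Umat B W P E D1 D2 i k *ᵥ l i)
        + (∑ i ∈ range N, (Fmat B W K E i k * C i) *ᵥ l i) := by
  have hRic : IsRiccatiSolution N A B Q R S K W P E := ⟨hKN, hW, hP, hK, hE⟩
  have hKsymm : ∀ k ≤ N, (K k).IsSymm := fun k hk => hRic.K_isSymm hQsymm hRsymm hk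
  have hWpos : ∀ k < N, (W k).PosDef := fun k hk => hRic.W_posDef hKsymm hRsymm hsosc hk
  suffices ∀ k ≤ N, p k = stateClosedForm N B W P K E C D1 D2 lm1 l k from this
  intro k hk
  induction k with
  | zero => rw [stateClosedForm_zero, hfeas.1]
  | succ k ih =>
    rw [stateClosedForm_succ hk, ← ih (by omega), hfeas.2 k hk,
      hRic.eq_feedback_of_isMinimizer hKsymm hWpos hfeas hmin hk, hE k hk]
    simp only [Matrix.add_mulVec, Matrix.mulVec_add, Matrix.mulVec_mulVec]
    abel

/-- **Closed form of the optimal state trajectory (Lemma 6.1).**  Under SOSC, the optimal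
states of the QDP satisfy
`p*_k = (E_{k−1}⋯E_0) l_{−1} + Σ_i U_i^k l_i + Σ_i F_i^k C_i l_i`. -/
theorem qdp_optimal_state_closed_form
    (N nx nu nd : ℕ) (hN : 1 ≤ N) (hnx : 1 ≤ nx) (hnu : 1 ≤ nu) (hnd : 1 ≤ nd)
    (A : ℕ → Matrix (Fin nx) (Fin nx) ℝ) (B : ℕ → Matrix (Fin nx) (Fin nu) ℝ)
    (C : ℕ → Matrix (Fin nx) (Fin nd) ℝ)
    (Q : ℕ → Matrix (Fin nx) (Fin nx) ℝ) (R : ℕ → Matrix (Fin nu) (Fin nu) ℝ)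
    (S : ℕ → Matrix (Fin nu) (Fin nx) ℝ)
    (D1 : ℕ → Matrix (Fin nd) (Fin nx) ℝ) (D2 : ℕ → Matrix (Fin nd) (Fin nu) ℝ)
    (hQsymm : ∀ k ≤ N, (Q k).IsSymm) (hRsymm : ∀ k < N, (R k).IsSymm)
    (lm1 : Fin nx → ℝ) (l : ℕ → Fin nd → ℝ)
    (hsosc : SOSC N A B Q R S)
    (K : ℕ → Matrix (Fin nx) (Fin nx) ℝ) (W : ℕ → Matrix (Fin nu) (Fin nu) ℝ)
    (P : ℕ → Matrix (Fin nu) (Fin nx) ℝ) (E : ℕ → Matrix (Fin nx) (Fin nx) ℝ)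
    (hKN : K N = Q N)
    (hW : ∀ k < N, W k = R k + (B k)ᵀ * K (k + 1) * B k)
    (hP : ∀ k < N, P k = -((W k)⁻¹ * ((B k)ᵀ * K (k + 1) * A k + S k)))
    (hK : ∀ k < N, K k =
      Q k + (A k)ᵀ * K (k + 1) * A k
        - ((B k)ᵀ * K (k + 1) * A k + S k)ᵀ * (W k)⁻¹ * ((B k)ᵀ * K (k + 1) * A k + S k))
    (hE : ∀ k < N, E k = A k + B k * P k)
    (p : ℕ → Fin nx → ℝ) (q : ℕ → Fin nu → ℝ)
    (hfeas : Feas N A B C lm1 l p q)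
    (hmin : ∀ p' q', Feas N A B C lm1 l p' q' →
      qdpObj N Q R S D1 D2 l p q ≤ qdpObj N Q R S D1 D2 l p' q') :
    ∀ k ≤ N, p k =
      prodE E 0 k *ᵥ lm1
        + (∑ i ∈ range N, Umat B W P E D1 D2 i k *ᵥ l i)
        + (∑ i ∈ range N, (Fmat B W K E i k * C i) *ᵥ l i) :=
  qdp_optimal_state_closed_form_general N nx nu nd A B C Q R S D1 D2 hQsymm hRsymm lm1 l hsosc K W P
    E hKN hW hP hK hE p q hfeas hmin
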